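/- Let F₂ and Q be finite index sets and let {𝓢_p}_{p∈F₂} be pairwise disjoint finite sets, all disjoint from Q; write F₁ := Q ∪ ∪_{p∈F₂} 𝓢_p, k₁ := |F₁|, k₂ := |F₂|. Let r : F₂ → ℝ≥0 and r' : F₁ → ℝ≥0, and set C₂ := Σ_{p∈F₂} r(p), C₁ := Σ_{q∈F₁} r'(q). Let D' be a finite set, uc₁, uc₂ ⊆ D' with |uc₁| ≤ m and |uc₂| ≤ m, and let u : F₂ → ℕ with Σ_{p∈F₂} u(p) = |uc₁ \ uc₂| and v : Q → ℕ with Σ_{e∈Q} v(e) ≤ |uc₂ \ uc₁|. Let a, b ≥ 0 with a + b = 1 and a·k₁ + b·k₂ = k' for some k' ≤ k. Then the fractional point with x_p = b for all p ∈ F₂ and q_e = a for all e ∈ Q satisfies Σ_{p∈F₂}(x_p + |𝓢_p|(1 − x_p)) + Σ_{e∈Q} q_e ≤ k and Σ_{p∈F₂}(1 − x_p)·u(p) + Σ_{e∈Q}(1 − q_e)·v(e) ≤ m − |uc₁ ∩ uc₂|, and its objective value Σ_{p∈F₂}[ x_p·(2r(p) + Σ_{q∈𝓢_p} 2r'(q))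 + (1 − x_p)·Σ_{q∈𝓢_p} r'(q) ] + Σ_{e∈Q} q_e·r'(e) is at most 2b·C₂ + (1+b)·C₁. Consequently, the optimum value of this covering-knapsack LP is at most 2b·C₂ + (1+b)·C₁. -/

import Mathlib

/-!
With `a = 1 - b`, the point `x ≡ b`, `q ≡ a` is the convex combination `a·F₁ + b·F₂` of the
two integral solutions. Since `F₁` is the disjoint union of `Q` and the stars `𝓢 p`, its
cardinality constraint evaluates to exactly `a·k₁ + b·k₂ = k'`, and its outlier constraint is
a convex combination of `|uc₁ \ uc₂|` and `|uc₂ \ uc₁|`, each at most `m - |uc₁ ∩ uc₂|`.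
In the objective, every star contributes `(1 + b)·Σ r'` and `Q` only `a·Σ r' ≤ (1 + b)·Σ r'`.
-/

open Finset

theorem Finset.card_sdiff_le_sub_card_inter {δ : Type*} [DecidableEq δ] {s t : Finset δ}
    {m : ℕ} (hs : s.card ≤ m) : ((s \ t).card : ℝ) ≤ m - ((s ∩ t).card : ℝ) := by
  have h : (s \ t).card + (s ∩ t).card ≤ m := (card_sdiff_add_card_inter s t).trans_le hs
  rw [le_sub_iff_add_le]
  exact_mod_cast h

namespace CoveringKnapsack

variable {ι κ : Type*} [DecidableEq κ] {F₂ : Finset ι} {Q : Finset κ} {𝓢 : ι → Finset κ}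

theorem sum_union_biUnion {M : Type*} [AddCommMonoid M]
    (hSdisj : ∀ p ∈ F₂, ∀ p' ∈ F₂, p ≠ p' → Disjoint (𝓢 p) (𝓢 p'))
    (hSQdisj : ∀ p ∈ F₂, Disjoint (𝓢 p) Q) (f : κ → M) :
    ∑ q ∈ Q ∪ F₂.biUnion 𝓢, f q = ∑ e ∈ Q, f e + ∑ p ∈ F₂, ∑ q ∈ 𝓢 p, f q := by
  have hQS : Disjoint Q (F₂.biUnion 𝓢) :=
    (disjoint_biUnion_right _ _ _).mpr fun p hp => (hSQdisj p hp).symm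
  rw [sum_union hQS, sum_biUnion hSdisj]

theorem card_constraint_eq {R : Type*} [CommRing R]
    (hSdisj : ∀ p ∈ F₂, ∀ p' ∈ F₂, p ≠ p' → Disjoint (𝓢 p) (𝓢 p'))
    (hSQdisj : ∀ p ∈ F₂, Disjoint (𝓢 p) Q) {a b : R} (hab : a + b = 1) :
    ∑ p ∈ F₂, (b + ((𝓢 p).card : R) * (1 - b)) + ∑ _e ∈ Q, a =
      a * ((Q ∪ F₂.biUnion 𝓢).card : R) + b * (F₂.card : R) := by
  have hcard : ((Q ∪ F₂.biUnion 𝓢).card : R) = Q.card + ∑ p ∈ F₂, ((𝓢 p).card : R) := by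
    simpa using sum_union_biUnion hSdisj hSQdisj (fun _ => (1 : R))
  rw [hcard, eq_sub_of_add_eq hab, sum_add_distrib, sum_const, sum_const, nsmul_eq_mul,
    nsmul_eq_mul, ← sum_mul]
  ring

theorem objective_le
    (hSdisj : ∀ p ∈ F₂, ∀ p' ∈ F₂, p ≠ p' → Disjoint (𝓢 p) (𝓢 p'))
    (hSQdisj : ∀ p ∈ F₂, Disjoint (𝓢 p) Q) (r : ι → ℝ) {r' : κ → ℝ}
    (hr' : ∀ e ∈ Q, 0 ≤ r' e) {a b : ℝ} (hab : a ≤ 1 + b) :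
    ∑ p ∈ F₂, (b * (2 * r p + ∑ q ∈ 𝓢 p, 2 * r' q) + (1 - b) * ∑ q ∈ 𝓢 p, r' q)
        + ∑ e ∈ Q, a * r' e
      ≤ 2 * b * ∑ p ∈ F₂, r p + (1 + b) * ∑ q ∈ Q ∪ F₂.biUnion 𝓢, r' q := by
  have hstar : ∀ p ∈ F₂,
      b * (2 * r p + ∑ q ∈ 𝓢 p, 2 * r' q) + (1 - b) * ∑ q ∈ 𝓢 p, r' q
        = 2 * b * r p + (1 + b) * ∑ q ∈ 𝓢 p, r' q := by
    intro p _
    rw [← mul_sum]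
    ring
  have hQ : a * ∑ e ∈ Q, r' e ≤ (1 + b) * ∑ e ∈ Q, r' e :=
    mul_le_mul_of_nonneg_right hab (sum_nonneg hr')
  rw [sum_congr rfl hstar, sum_add_distrib, ← mul_sum, ← mul_sum, ← mul_sum,
    sum_union_biUnion hSdisj hSQdisj]
  linarith

theorem outlier_constraint_le {δ : Type*} [DecidableEq δ] {uc₁ uc₂ : Finset δ} {m : ℕ}
    (hm₁ : uc₁.card ≤ m) (hm₂ : uc₂.card ≤ m) {x y a b : ℝ}
    (hx : x ≤ (uc₁ \ uc₂).card) (hy : y ≤ (uc₂ \ uc₁).card)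
    (ha : 0 ≤ a) (hb : 0 ≤ b) (hab : a + b = 1) :
    a * x + b * y ≤ (m : ℝ) - ((uc₁ ∩ uc₂).card : ℝ) := by
  have h₁ := hx.trans (card_sdiff_le_sub_card_inter (t := uc₂) hm₁)
  have h₂ := hy.trans (card_sdiff_le_sub_card_inter (t := uc₁) hm₂)
  rw [inter_comm] at h₂
  exact (Convex.combo_le_max x y ha hb hab).trans (max_le h₁ h₂)

end CoveringKnapsack

open CoveringKnapsack in
theorem stmt_5 {ι κ δ : Type*} [DecidableEq κ] [DecidableEq δ]
    (F₂ : Finset ι) (Q : Finset κ) (𝓢 : ι → Finset κ)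
    (hSdisj : ∀ p ∈ F₂, ∀ p' ∈ F₂, p ≠ p' → Disjoint (𝓢 p) (𝓢 p'))
    (hSQdisj : ∀ p ∈ F₂, Disjoint (𝓢 p) Q)
    (r : ι → ℝ) (r' : κ → ℝ)
    (hr' : ∀ q ∈ Q ∪ F₂.biUnion 𝓢, 0 ≤ r' q)
    (uc₁ uc₂ : Finset δ)
    (m : ℕ) (hm₁ : uc₁.card ≤ m) (hm₂ : uc₂.card ≤ m)
    (u : ι → ℕ) (hu : ∑ p ∈ F₂, u p = (uc₁ \ uc₂).card)
    (v : κ → ℕ) (hv : ∑ e ∈ Q, v e ≤ (uc₂ \ uc₁).card)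
    (a b k' k : ℝ) (ha : 0 ≤ a) (hb : 0 ≤ b) (hab : a + b = 1)
    (habk : a * ((Q ∪ F₂.biUnion 𝓢).card : ℝ) + b * (F₂.card : ℝ) = k')
    (hk' : k' ≤ k) :
    -- the cardinality constraint of (2C-P)
    (∑ p ∈ F₂, (b + ((𝓢 p).card : ℝ) * (1 - b))) + (∑ _e ∈ Q, a) ≤ k ∧
    -- the outlier constraint of (2C-P)
    (∑ p ∈ F₂, (1 - b) * (u p : ℝ)) + (∑ e ∈ Q, (1 - a) * (v e : ℝ)) ≤
      (m : ℝ) - ((uc₁ ∩ uc₂).card : ℝ) ∧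
    -- the objective value is at most 2b·C₂ + (1+b)·C₁
    (∑ p ∈ F₂, (b * (2 * r p + ∑ q ∈ 𝓢 p, 2 * r' q) + (1 - b) * ∑ q ∈ 𝓢 p, r' q))
      + (∑ e ∈ Q, a * r' e)
      ≤ 2 * b * (∑ p ∈ F₂, r p) + (1 + b) * (∑ q ∈ Q ∪ F₂.biUnion 𝓢, r' q) := by
  refine ⟨?_, ?_, ?_⟩
  · rw [card_constraint_eq hSdisj hSQdisj hab, habk]
    exact hk'
  · rw [← mul_sum, ← mul_sum, sub_eq_of_eq_add' hab.symm, sub_eq_of_eq_add hab.symm]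
    refine outlier_constraint_le hm₁ hm₂ ?_ ?_ ha hb hab
    · exact_mod_cast hu.le
    · exact_mod_cast hv
  · exact objective_le hSdisj hSQdisj r (fun e he => hr' e (mem_union_left _ he)) (by linarith)
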